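/- Let n ≥ 4 be an integer, M > 0 and λ > 0 satisfy the nondegeneracy condition, let r_p = ((n-1)M)^{1/(n-3)}, μ̃_p = μ̃(r_p) > 0, and z² = 1. Then 1 - ((n-1)/(n-3)) r_p² λ > 0, and the real 2×2 matrix with rows (0, 2 r_p⁴ μ̃_p) and (2(n-3) r_p^{-4} μ̃_p^{-2} z², 0) — the linearization of the Hamilton flow at the trapped set in the normal coordinates (r - r_p, ξ) — has exactly the two eigenvalues ± 2 r_p ( (n-1) / (1 - ((n-1)/(n-3)) r_p² λ) )^{1/2}. -/

import Mathlib

/-- The rescaled Schwarzschild–de Sitter metric coefficient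
`μ̃(r) = r^{-2} - 2 M r^{1-n} - λ`. -/
noncomputable def mutilde (n : ℕ) (M lam : ℝ) (r : ℝ) : ℝ :=
  r ^ (-2 : ℝ) - 2 * M * r ^ ((1 : ℝ) - (n : ℝ)) - lam

/-- The radius `r_p = ((n-1) M)^{1/(n-3)}` of the photon sphere. -/
noncomputable def rpCrit (n : ℕ) (M : ℝ) : ℝ :=
  (((n : ℝ) - 1) * M) ^ ((1 : ℝ) / ((n : ℝ) - 3))

/-! The photon sphere satisfies `r_p ^ (n - 3) = (n - 1) M`, which gives the factorization
`μ̃(r_p) = (n - 3) / ((n - 1) r_p²) · (1 - (n - 1) / (n - 3) · r_p² λ)`. Raising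
`r_p² λ < (n - 3) / (n - 1)` to the power `n - 3` turns it into the nondegeneracy condition, so
both factors are positive. The matrix is antidiagonal, so its eigenvalues are the two square roots
of the product of its off-diagonal entries, and by the factorization that product is
`4 r_p² (n - 1) / (1 - (n - 1) / (n - 3) · r_p² λ)`. -/

namespace Matrix

theorem exists_mulVec_eq_smul_iff_det_sub_eq_zero {n R : Type*} [Fintype n] [DecidableEq n]
    [CommRing R] [IsDomain R] (A : Matrix n n R) (c : R) :
    (∃ v ≠ 0, A *ᵥ v = c • v) ↔ (A - c • (1 : Matrix n n R)).det = 0 := by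
  rw [← exists_mulVec_eq_zero_iff]
  simp only [sub_mulVec, smul_mulVec, one_mulVec, sub_eq_zero]

theorem exists_antidiag_mulVec_eq_smul_iff {R : Type*} [CommRing R] [IsDomain R]
    {a b s : R} (hab : a * b = s ^ 2) (c : R) :
    (∃ v ≠ 0, !![0, a; b, 0] *ᵥ v = c • v) ↔ c = s ∨ c = -s := by
  rw [exists_mulVec_eq_smul_iff_det_sub_eq_zero, ← sq_eq_sq_iff_eq_or_eq_neg, ← hab]
  simp [det_fin_two, sq, sub_eq_zero]

end Matrix

open Real

theorem rpCrit_pos {n : ℕ} {M : ℝ} (hn : 1 < n) (hM : 0 < M) : 0 < rpCrit n M := by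
  have : (1 : ℝ) < n := by exact_mod_cast hn
  exact rpow_pos_of_pos (mul_pos (by linarith) hM) _

theorem rpCrit_rpow {n : ℕ} {M : ℝ} (hn : 3 < n) (hM : 0 ≤ M) :
    rpCrit n M ^ ((n : ℝ) - 3) = ((n : ℝ) - 1) * M := by
  have h3 : (0 : ℝ) < n - 3 := by rw [sub_pos]; exact_mod_cast hn
  rw [rpCrit, ← rpow_mul (mul_nonneg (by linarith) hM), one_div_mul_cancel h3.ne', rpow_one]

theorem rpCrit_sq_mul_lt {n : ℕ} {M lam : ℝ} (hn : 3 < n) (hM : 0 < M) (hlam : 0 ≤ lam)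
    (hnd : M ^ 2 * lam ^ ((n : ℝ) - 3)
      < ((n : ℝ) - 3) ^ ((n : ℝ) - 3) / ((n : ℝ) - 1) ^ ((n : ℝ) - 1)) :
    rpCrit n M ^ 2 * lam < ((n : ℝ) - 3) / ((n : ℝ) - 1) := by
  have h3 : (0 : ℝ) < n - 3 := by rw [sub_pos]; exact_mod_cast hn
  have h1 : (0 : ℝ) < n - 1 := by linarith
  have hR := (rpCrit_pos (n := n) (by omega) hM).le
  rw [← rpow_lt_rpow_iff (by positivity) (by positivity) h3]
  calc (rpCrit n M ^ 2 * lam) ^ ((n : ℝ) - 3)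
      = (rpCrit n M ^ ((n : ℝ) - 3)) ^ 2 * lam ^ ((n : ℝ) - 3) := by
        rw [mul_rpow (by positivity) hlam, ← rpow_natCast, ← rpow_mul hR,
          mul_comm ((2 : ℕ) : ℝ), rpow_mul hR, rpow_natCast]
    _ = (n - 1) ^ 2 * (M ^ 2 * lam ^ ((n : ℝ) - 3)) := by
        rw [rpCrit_rpow hn hM.le]; ring
    _ < (n - 1) ^ 2 * ((n - 3) ^ ((n : ℝ) - 3) / (n - 1) ^ ((n : ℝ) - 1)) := by gcongr
    _ = ((n - 3) / (n - 1)) ^ ((n : ℝ) - 3) := by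
        have : ((n : ℝ) - 1) ^ ((n : ℝ) - 1) = (n - 1) ^ ((n : ℝ) - 3) * (n - 1) ^ 2 := by
          rw [← rpow_add_natCast h1.ne']; ring_nf
        rw [div_rpow h3.le h1.le, this]
        field_simp

theorem one_sub_rpCrit_sq_mul_pos {n : ℕ} {M lam : ℝ} (hn : 3 < n) (hM : 0 < M)
    (hlam : 0 ≤ lam)
    (hnd : M ^ 2 * lam ^ ((n : ℝ) - 3)
      < ((n : ℝ) - 3) ^ ((n : ℝ) - 3) / ((n : ℝ) - 1) ^ ((n : ℝ) - 1)) :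
    0 < 1 - ((n : ℝ) - 1) / ((n : ℝ) - 3) * rpCrit n M ^ 2 * lam := by
  have h3 : (0 : ℝ) < n - 3 := by rw [sub_pos]; exact_mod_cast hn
  rw [sub_pos, mul_assoc, ← lt_div_iff₀' (div_pos (by linarith) h3), one_div_div]
  exact rpCrit_sq_mul_lt hn hM hlam hnd

theorem mutilde_rpCrit {n : ℕ} {M : ℝ} (hn : 3 < n) (hM : 0 < M) (lam : ℝ) :
    mutilde n M lam (rpCrit n M) = ((n : ℝ) - 3) / (((n : ℝ) - 1) * rpCrit n M ^ 2)
      * (1 - ((n : ℝ) - 1) / ((n : ℝ) - 3) * rpCrit n M ^ 2 * lam) := by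
  have h3 : (0 : ℝ) < n - 3 := by rw [sub_pos]; exact_mod_cast hn
  have h1 : (n : ℝ) - 1 ≠ 0 := by linarith
  have hR := rpCrit_pos (n := n) (by omega) hM
  have hpow : rpCrit n M ^ ((1 : ℝ) - n) = rpCrit n M ^ (-2 : ℝ) / (((n : ℝ) - 1) * M) := by
    rw [← rpCrit_rpow hn hM.le, ← rpow_sub hR]; ring_nf
  rw [mutilde, hpow, rpow_neg hR.le, rpow_two]
  field_simp
  ring

theorem stmt10 (n : ℕ) (hn : 4 ≤ n) (M lam : ℝ) (hM : 0 < M) (hlam : 0 < lam)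
    (hnd : M ^ 2 * lam ^ ((n : ℝ) - 3)
      < ((n : ℝ) - 3) ^ ((n : ℝ) - 3) / ((n : ℝ) - 1) ^ ((n : ℝ) - 1))
    (z : ℝ) (hz : z ^ 2 = 1) :
    0 < 1 - (((n : ℝ) - 1) / ((n : ℝ) - 3)) * (rpCrit n M) ^ 2 * lam ∧
    ∀ A : Matrix (Fin 2) (Fin 2) ℝ,
      A = !![0, 2 * (rpCrit n M) ^ 4 * mutilde n M lam (rpCrit n M);
             2 * ((n : ℝ) - 3) * (rpCrit n M) ^ (-4 : ℝ)
               * ((mutilde n M lam (rpCrit n M)) ^ 2)⁻¹ * z ^ 2, 0] →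
      ∀ c : ℝ,
        (∃ v : Fin 2 → ℝ, v ≠ 0 ∧ A.mulVec v = c • v) ↔
          (c = 2 * rpCrit n M
              * Real.sqrt (((n : ℝ) - 1)
                  / (1 - (((n : ℝ) - 1) / ((n : ℝ) - 3)) * (rpCrit n M) ^ 2 * lam))
          ∨ c = -(2 * rpCrit n M
              * Real.sqrt (((n : ℝ) - 1)
                  / (1 - (((n : ℝ) - 1) / ((n : ℝ) - 3)) * (rpCrit n M) ^ 2 * lam)))) := by
  have hR := rpCrit_pos (n := n) (by omega) hM
  have hD := one_sub_rpCrit_sq_mul_pos hn hM hlam.le hnd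
  refine ⟨hD, ?_⟩
  rintro A rfl c
  refine Matrix.exists_antidiag_mulVec_eq_smul_iff ?_ c
  have h3 : (0 : ℝ) < n - 3 := by rw [sub_pos]; exact_mod_cast hn
  have h1 : (0 : ℝ) < n - 1 := by linarith
  rw [hz, mutilde_rpCrit hn hM, mul_pow, mul_pow, sq_sqrt (div_pos h1 hD).le, rpow_neg hR.le,
    rpow_ofNat]
  field_simp
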